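/- Let X be a nonempty compact metric space and μ a finite Borel measure on X with full support (μ(U) > 0 for every nonempty open U ⊆ X). Let u, w : X → ℝ be continuous with min u = 0, max u = l > 0 and min w = 0. For t ∈ [0,1] set h_t := min(t·l, u) + w and g(t) := ∫_X normalize(h_t) dμ. Then g is Lipschitz continuous on [0,1] (indeed |g(t) − g(s)| ≤ |t − s| · l · μ(X)), and there exists a unique t₀ ∈ [0,1] such that g(t₀) ≤ g(t) for all t ∈ [0,1]. -/

import Mathlib

open MeasureTheory Set

/-- The (attained) minimum of `f` on a nonempty compact space. -/
noncomputable def minF {X : Type*} (f : X → ℝ) : ℝ := sInf (Set.range f)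

/-- The (attained) maximum of `f` on a nonempty compact space. -/
noncomputable def maxF {X : Type*} (f : X → ℝ) : ℝ := sSup (Set.range f)

/-- The oscillation `max f - min f`. -/
noncomputable def oscF {X : Type*} (f : X → ℝ) : ℝ := maxF f - minF f

/-- `normalize f = f - min f`. -/
noncomputable def normF {X : Type*} (f : X → ℝ) : X → ℝ := fun x => f x - minF f

/-- The minimizer set of `f`. -/
def argminF {X : Type*} (f : X → ℝ) : Set X := {x | f x = minF f}

/-- The maximizer set of `f`. -/
def argmaxF {X : Type*} (f : X → ℝ) : Set X := {x | f x = maxF f}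

/-!
With `c := min (u + w)`, the minimum of `min a u + w` is `min a c`, so the integrand of
`g` is `min (t l) u - min (t l) c + w`. Pointwise in `x` this is `1`-Lipschitz in `a = t l`,
which gives the Lipschitz bound. For `a < b ≤ c` the increment `min b u - min a u - (b - a)`
is `≤ 0`, and `< 0` where `u` attains `0`; for `c ≤ a < b` the increment `min b u - min a u` is
`≥ 0`, and `> 0` where `u` attains `l`. Full support turns these into strict inequalities
of integrals, so `g` strictly decreases on `[0, t₀]` and strictly increases on `[t₀, 1]`
for `t₀ = min c l / l`.
-/

theorem existsUnique_forall_le_of_strictAntiOn_of_strictMonoOn {α β : Type*}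
    [LinearOrder α] [Preorder β] {g : α → β} {a b t₀ : α} (ht₀ : t₀ ∈ Icc a b)
    (hanti : StrictAntiOn g (Icc a t₀)) (hmono : StrictMonoOn g (Icc t₀ b)) :
    ∃! t, t ∈ Icc a b ∧ ∀ s ∈ Icc a b, g t ≤ g s := by
  have hlt : ∀ s ∈ Icc a b, s ≠ t₀ → g t₀ < g s := by
    intro s hs hne
    rcases hne.lt_or_gt with h | h
    · exact hanti ⟨hs.1, h.le⟩ ⟨ht₀.1, le_rfl⟩ h
    · exact hmono ⟨le_rfl, ht₀.2⟩ ⟨h.le, hs.2⟩ h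
  refine ⟨t₀, ⟨ht₀, fun s hs => ?_⟩, fun t ⟨ht, hmin⟩ => ?_⟩
  · rcases eq_or_ne s t₀ with rfl | hne
    · exact le_rfl
    · exact (hlt s hs hne).le
  · by_contra hne
    exact (hlt t ht hne).not_ge (hmin t₀ ht₀)

theorem abs_min_sub_min_sub_sub_le (a b c v : ℝ) :
    |(min b v - min b c) - (min a v - min a c)| ≤ |b - a| := by
  rw [abs_le]
  rcases le_total a b with hab | hab
  · rw [abs_of_nonneg (sub_nonneg.2 hab)]
    constructor <;> (simp only [min_def]; split_ifs <;> linarith)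
  · rw [abs_of_nonpos (sub_nonpos.2 hab)]
    constructor <;> (simp only [min_def]; split_ifs <;> linarith)

section MinMax

variable {X : Type*} [TopologicalSpace X] [CompactSpace X] {f : X → ℝ}

theorem minF_le (hf : Continuous f) (x : X) : minF f ≤ f x :=
  csInf_le (isCompact_range hf).bddBelow ⟨x, rfl⟩

theorem exists_eq_minF [Nonempty X] (hf : Continuous f) : ∃ x, f x = minF f :=
  (isCompact_range hf).sInf_mem (range_nonempty f)

theorem exists_eq_maxF [Nonempty X] (hf : Continuous f) : ∃ x, f x = maxF f :=
  (isCompact_range hf).sSup_mem (range_nonempty f)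

end MinMax

theorem integral_lt_integral_of_continuous {X : Type*} [TopologicalSpace X] [CompactSpace X]
    [MeasurableSpace X] [OpensMeasurableSpace X] {μ : Measure X} [IsFiniteMeasure μ]
    [μ.IsOpenPosMeasure] {f g : X → ℝ} (hf : Continuous f) (hg : Continuous g) (hle : f ≤ g)
    {x : X} (hlt : f x < g x) : ∫ x, f x ∂μ < ∫ x, g x ∂μ := by
  have hint : ∀ {φ : X → ℝ}, Continuous φ → Integrable φ μ := fun hφ =>
    hφ.integrable_of_hasCompactSupport (HasCompactSupport.of_compactSpace _)
  rw [← sub_pos, ← integral_sub (hint hg) (hint hf)]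
  exact integral_pos_of_integrable_nonneg_nonzero (hg.sub hf) (hint (hg.sub hf))
    (fun y => sub_nonneg.2 (hle y)) (sub_pos.2 hlt).ne'

/-- The paper's `g(t)` is `pathIntegral μ u w (t * l)`. -/
noncomputable def pathIntegral {X : Type*} [MeasurableSpace X] (μ : Measure X) (u w : X → ℝ)
    (a : ℝ) : ℝ :=
  ∫ x, normF (fun x => min a (u x) + w x) x ∂μ

section TropicalPath

variable {X : Type*} [TopologicalSpace X] [CompactSpace X] [Nonempty X] {u w : X → ℝ}

theorem minF_min_add (hu : Continuous u) (hw : Continuous w) (hwmin : minF w = 0) (a : ℝ) :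
    minF (fun x => min a (u x) + w x) = min a (minF fun x => u x + w x) := by
  set c := minF fun x => u x + w x
  have hw0 : ∀ x, 0 ≤ w x := fun x => hwmin ▸ minF_le hw x
  have hc : ∀ x, c ≤ u x + w x := minF_le (hu.add hw)
  obtain ⟨xc, hxc⟩ := exists_eq_minF (f := fun x => u x + w x) (hu.add hw)
  obtain ⟨xw, hxw⟩ := exists_eq_minF hw
  rw [hwmin] at hxw
  refine IsLeast.csInf_eq ⟨?_, ?_⟩
  · rcases le_total a c with hac | hca
    · refine ⟨xw, ?_⟩
      have := hc xw
      simp only [min_def]; split_ifs <;> linarith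
    · refine ⟨xc, ?_⟩
      have := hw0 xc
      simp only [min_def]; split_ifs <;> linarith
  · rintro _ ⟨x, rfl⟩
    have := hc x
    have := hw0 x
    simp only [min_def]; split_ifs <;> linarith

variable [MeasurableSpace X] [OpensMeasurableSpace X] {μ : Measure X} [IsFiniteMeasure μ]

theorem pathIntegral_sub (hu : Continuous u) (hw : Continuous w) (hwmin : minF w = 0)
    (a b : ℝ) :
    pathIntegral μ u w b - pathIntegral μ u w a =
      ∫ x, ((min b (u x) - min b (minF fun x => u x + w x)) -
        (min a (u x) - min a (minF fun x => u x + w x))) ∂μ := by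
  have hint : ∀ a : ℝ, Integrable (normF fun x => min a (u x) + w x) μ := fun a =>
    ((continuous_const.min hu).add hw |>.sub continuous_const).integrable_of_hasCompactSupport
      (HasCompactSupport.of_compactSpace _)
  rw [pathIntegral, pathIntegral, ← integral_sub (hint b) (hint a)]
  congr 1 with x
  simp only [normF, minF_min_add hu hw hwmin]
  ring

theorem abs_pathIntegral_sub_le (hu : Continuous u) (hw : Continuous w) (hwmin : minF w = 0)
    (a b : ℝ) :
    |pathIntegral μ u w b - pathIntegral μ u w a| ≤ |b - a| * μ.real univ := by
  rw [pathIntegral_sub hu hw hwmin, ← Real.norm_eq_abs]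
  exact norm_integral_le_of_norm_le_const
    (Filter.Eventually.of_forall fun x => abs_min_sub_min_sub_sub_le a b _ (u x))

variable [μ.IsOpenPosMeasure]

theorem pathIntegral_strictAntiOn (hu : Continuous u) (hw : Continuous w) (hwmin : minF w = 0) :
    StrictAntiOn (pathIntegral μ u w) (Icc (minF u) (minF fun x => u x + w x)) := by
  intro a ha b hb hab
  obtain ⟨x₀, hx₀⟩ := exists_eq_minF hu
  rw [← sub_neg, pathIntegral_sub hu hw hwmin, ← integral_zero X ℝ]
  refine integral_lt_integral_of_continuous (x := x₀) (by fun_prop) continuous_const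
    (fun x => ?_) ?_
  · have := min_le_left b (u x)
    simp only [min_def] at *; split_ifs at * <;> linarith [hb.2]
  · have := ha.1
    simp only [min_def]; split_ifs <;> linarith [hb.2]

theorem pathIntegral_strictMonoOn (hu : Continuous u) (hw : Continuous w) (hwmin : minF w = 0) :
    StrictMonoOn (pathIntegral μ u w) (Icc (min (minF fun x => u x + w x) (maxF u)) (maxF u)) := by
  set c := minF fun x => u x + w x
  intro a ha b hb hab
  have hca : c ≤ a := by
    rcases min_choice c (maxF u) with h | h <;> rw [h] at ha <;> linarith [ha.1, hb.2]
  obtain ⟨x₁, hx₁⟩ := exists_eq_maxF hu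
  rw [← sub_pos, pathIntegral_sub hu hw hwmin, ← integral_zero X ℝ]
  refine integral_lt_integral_of_continuous (x := x₁) continuous_const (by fun_prop)
    (fun x => ?_) ?_
  · have := min_le_left a (u x)
    simp only [min_def] at *; split_ifs at * <;> linarith
  · have := hb.2
    simp only [min_def]; split_ifs <;> linarith

end TropicalPath

theorem stmt_13 {X : Type*} [MetricSpace X] [CompactSpace X] [Nonempty X]
    [MeasurableSpace X] [BorelSpace X]
    (μ : Measure X) [IsFiniteMeasure μ]
    (hfull : ∀ U : Set X, IsOpen U → U.Nonempty → 0 < μ U)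
    (u w : X → ℝ) (hu : Continuous u) (hw : Continuous w)
    (l : ℝ) (hl : 0 < l) (humin : minF u = 0) (humax : maxF u = l)
    (hwmin : minF w = 0) :
    (∀ s ∈ Set.Icc (0:ℝ) 1, ∀ t ∈ Set.Icc (0:ℝ) 1,
      |(∫ x, normF (fun x => min (t * l) (u x) + w x) x ∂μ) -
        ∫ x, normF (fun x => min (s * l) (u x) + w x) x ∂μ| ≤
        |t - s| * l * (μ Set.univ).toReal) ∧
    (∃! t₀ : ℝ, t₀ ∈ Set.Icc (0:ℝ) 1 ∧
      ∀ t ∈ Set.Icc (0:ℝ) 1,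
        (∫ x, normF (fun x => min (t₀ * l) (u x) + w x) x ∂μ) ≤
          ∫ x, normF (fun x => min (t * l) (u x) + w x) x ∂μ) := by
  have : μ.IsOpenPosMeasure := ⟨fun U hU hne => (hfull U hU hne).ne'⟩
  obtain ⟨xc, hxc⟩ := exists_eq_minF (f := fun x => u x + w x) (hu.add hw)
  set c := minF fun x => u x + w x
  have hc : 0 ≤ c := hxc ▸ add_nonneg (humin ▸ minF_le hu xc) (hwmin ▸ minF_le hw xc)
  have hscale : StrictMono fun t : ℝ => t * l := strictMono_mul_right_of_pos hl
  have ht₀ : min c l / l * l = min c l := div_mul_cancel₀ _ hl.ne'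
  have hanti : StrictAntiOn (fun t => pathIntegral μ u w (t * l)) (Icc 0 (min c l / l)) := by
    refine (pathIntegral_strictAntiOn hu hw hwmin).comp_strictMonoOn (hscale.strictMonoOn _)
      fun t ht => ⟨?_, ?_⟩
    · rw [humin]; exact mul_nonneg ht.1 hl.le
    · have := hscale.monotone ht.2; rw [ht₀] at this; linarith [min_le_left c l]
  have hmono : StrictMonoOn (fun t => pathIntegral μ u w (t * l)) (Icc (min c l / l) 1) := by
    refine (pathIntegral_strictMonoOn hu hw hwmin).comp (hscale.strictMonoOn _)
      fun t ht => ⟨?_, ?_⟩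
    · rw [humax, ← ht₀]; exact hscale.monotone ht.1
    · rw [humax]; simpa using hscale.monotone ht.2
  refine ⟨fun s _ t _ => ?_, existsUnique_forall_le_of_strictAntiOn_of_strictMonoOn
    ⟨by positivity, (div_le_one hl).2 (min_le_right c l)⟩ hanti hmono⟩
  calc _ ≤ |t * l - s * l| * μ.real univ := abs_pathIntegral_sub_le hu hw hwmin (s * l) (t * l)
    _ = |t - s| * l * (μ univ).toReal := by rw [← sub_mul, abs_mul, abs_of_pos hl, measureReal_def]
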